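/- arXiv:1405.7849 — 2 statements merged into one kernel-verified Lean document; each statement's English description precedes it below -/
import Mathlib

section
/- For every even n ≥ 2, every deterministic OBDD computing the Boolean function NotO_n has width at least n/2 + 1. -/
/-- Number of 1s in a binary string ν ∈ {0,1}^n. -/
def countOnes {n : ℕ} (ν : Fin n → Bool) : ℕ :=
  (Finset.univ.filter (fun i => ν i = true)).card

/-- Number of 0s in a binary string ν ∈ {0,1}^n. -/
def countZeros {n : ℕ} (ν : Fin n → Bool) : ℕ :=
  (Finset.univ.filter (fun i => ν i = false)).card

/-- Number of 1s among the first `k` bits. -/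
def countOnesFirst (k : ℕ) {n : ℕ} (ν : Fin n → Bool) : ℕ :=
  (Finset.univ.filter (fun i : Fin n => (i : ℕ) < k ∧ ν i = true)).card

/-- Number of 0s among the first `k` bits. -/
def countZerosFirst (k : ℕ) {n : ℕ} (ν : Fin n → Bool) : ℕ :=
  (Finset.univ.filter (fun i : Fin n => (i : ℕ) < k ∧ ν i = false)).card

/-- A deterministic OBDD of width `d` on `n` Boolean variables. -/
structure DOBDD (n d : ℕ) where
  ord : Equiv.Perm (Fin n)
  T : Fin n → Bool → Fin d → Fin d
  start : Fin d
  Accept : Finset (Fin d)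

/-- The node reached by a deterministic OBDD after reading all input bits. -/
def DOBDD.run {n d : ℕ} (M : DOBDD n d) (ν : Fin n → Bool) : Fin d :=
  (List.finRange n).foldl (fun v j => M.T j (ν (M.ord j)) v) M.start

def DOBDD.accepts {n d : ℕ} (M : DOBDD n d) (ν : Fin n → Bool) : Prop :=
  M.run ν ∈ M.Accept

/-- A deterministic OBDD computes a total Boolean function. -/
def DOBDD.computes {n d : ℕ} (M : DOBDD n d) (f : (Fin n → Bool) → Bool) : Prop :=
  ∀ ν, M.accepts ν ↔ f ν = true

/-- A nondeterministic OBDD of width `d` on `n` Boolean variables. -/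
structure NOBDD (n d : ℕ) where
  ord : Equiv.Perm (Fin n)
  T : Fin n → Bool → Fin d → Set (Fin d)
  start : Fin d
  Accept : Finset (Fin d)

/-- The set of nodes reachable by a nondeterministic OBDD after reading all input bits. -/
def NOBDD.reach {n d : ℕ} (M : NOBDD n d) (ν : Fin n → Bool) : Set (Fin d) :=
  (List.finRange n).foldl (fun S j => {w | ∃ v ∈ S, w ∈ M.T j (ν (M.ord j)) v}) {M.start}

def NOBDD.accepts {n d : ℕ} (M : NOBDD n d) (ν : Fin n → Bool) : Prop :=
  ∃ v ∈ M.reach ν, v ∈ M.Accept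

/-- A nondeterministic OBDD computes a total Boolean function. -/
def NOBDD.computes {n d : ℕ} (M : NOBDD n d) (f : (Fin n → Bool) → Bool) : Prop :=
  ∀ ν, M.accepts ν ↔ f ν = true

/-- The class of Boolean functions on n variables computed by deterministic
OBDDs of width at most `w`. -/
def OBDDclass (n w : ℕ) : Set ((Fin n → Bool) → Bool) :=
  {f | ∃ d, d ≤ w ∧ ∃ M : DOBDD n d, M.computes f}

/-- The class of Boolean functions on n variables computed by nondeterministic
OBDDs of width at most `w`. -/
def NOBDDclass (n w : ℕ) : Set ((Fin n → Bool) → Bool) :=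
  {f | ∃ d, d ≤ w ∧ ∃ M : NOBDD n d, M.computes f}

/-- Final probability distribution of a stable probabilistic OBDD given by the pair of
left-stochastic matrices `A`, variable order `ord`, and initial node `s`. -/
noncomputable def stableProbRun {n d : ℕ} (A : Bool → Matrix (Fin d) (Fin d) ℝ)
    (ord : Equiv.Perm (Fin n)) (s : Fin d) (ν : Fin n → Bool) : Fin d → ℝ :=
  (List.finRange n).foldl (fun v j => (A (ν (ord j))).mulVec v)
    (fun i => if i = s then 1 else 0)

/-- Final quantum state of a stable ID quantum OBDD given by the pair of matrices `U`
and the initial computational-basis state `q0`, reading bits in the natural order. -/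
noncomputable def quantumRunStable {n d : ℕ} (U : Bool → Matrix (Fin d) (Fin d) ℂ) (q0 : Fin d)
    (ν : Fin n → Bool) : Fin d → ℂ :=
  (List.finRange n).foldl (fun ψ j => (U (ν j)).mulVec ψ)
    (fun i => if i = q0 then 1 else 0)

/-- A quantum OBDD of width `d` on `n` Boolean variables. -/
structure QOBDD (n d : ℕ) where
  ord : Equiv.Perm (Fin n)
  U : Fin n → Bool → Matrix (Fin d) (Fin d) ℂ
  unitary : ∀ j b, U j b ∈ Matrix.unitaryGroup (Fin d) ℂ
  q0 : Fin d
  Accept : Finset (Fin d)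

/-- The final state of a quantum OBDD on input ν. -/
noncomputable def QOBDD.finalState {n d : ℕ} (M : QOBDD n d) (ν : Fin n → Bool) : Fin d → ℂ :=
  (List.finRange n).foldl (fun ψ j => (M.U j (ν (M.ord j))).mulVec ψ)
    (fun i => if i = M.q0 then 1 else 0)

/-- The acceptance probability of a quantum OBDD on input ν. -/
noncomputable def QOBDD.acceptProb {n d : ℕ} (M : QOBDD n d) (ν : Fin n → Bool) : ℝ :=
  ∑ i ∈ M.Accept, Complex.normSq (M.finalState ν i)

/-- `NotO_n(ν) = 0` iff `#0(ν) = #1(ν)`. -/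
def NotO (n : ℕ) (ν : Fin n → Bool) : Bool := !decide (countZeros ν = countOnes ν)

/-- `NotSQUARE_n(ν) = 0` iff `(#0(ν))² = #1(ν)`. -/
def NotSQUARE (n : ℕ) (ν : Fin n → Bool) : Bool := !decide ((countZeros ν) ^ 2 = countOnes ν)

/-- `NotPOWER_n(ν) = 0` iff `2^{#0(ν)} = #1(ν)`. -/
def NotPOWER (n : ℕ) (ν : Fin n → Bool) : Bool := !decide (2 ^ (countZeros ν) = countOnes ν)

/-- `MOD^k_n(ν) = 1` iff `#1(ν) ≡ 0 (mod k)`. -/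
def MODf (n k : ℕ) (ν : Fin n → Bool) : Bool := decide (countOnes ν % k = 0)

/-- `NotO^k_n(ν) = 0` iff `#^k_0(ν) = #^k_1(ν) = k/2`. -/
def NotOk (n k : ℕ) (ν : Fin n → Bool) : Bool :=
  !decide (countZerosFirst k ν = k / 2 ∧ countOnesFirst k ν = k / 2)

/-- The ordered subsequence of value bits `ν_{2i}` (1-indexed, `1 ≤ i ≤ k/2`) whose
marker bit `ν_{2i-1}` equals `b`; `b = false` gives `α(ν)` and `b = true` gives `β(ν)`. -/
def valueSubseq {n : ℕ} (k : ℕ) (b : Bool) (ν : Fin n → Bool) : List Bool :=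
  (List.range (k / 2)).filterMap (fun j =>
    if h : 2 * j + 1 < n then
      if ν ⟨2 * j, by omega⟩ = b then some (ν ⟨2 * j + 1, h⟩) else none
    else none)

/-- `EQS^k_n(ν) = 1` iff `α(ν) = β(ν)`. -/
def EQS (n k : ℕ) (ν : Fin n → Bool) : Bool :=
  decide (valueSubseq k false ν = valueSubseq k true ν)

/-- `NotEQS^k_n(ν) = 1 - EQS^k_n(ν)`. -/
def NotEQS (n k : ℕ) (ν : Fin n → Bool) : Bool := !(EQS n k ν)

/-- Auxiliary: foldl congruence. -/
lemma auxFoldlCongr {α β : Type*} (l : List β) (f g : α → β → α) (s : α)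
    (h : ∀ x ∈ l, ∀ v, f v x = g v x) : l.foldl f s = l.foldl g s := by
  induction l generalizing s with
  | nil => rfl
  | cons x xs ih =>
      simp only [List.foldl_cons, h x (by simp)]
      exact ih _ (fun y hy v => h y (by simp [hy]) v)

lemma auxMemTake {n m : ℕ} {j : Fin n} (h : j ∈ (List.finRange n).take m) : (j : ℕ) < m := by
  rw [List.mem_take_iff_getElem] at h
  obtain ⟨i, hi, rfl⟩ := h
  simp at hi ⊢
  omega

lemma auxMemDrop {n m : ℕ} {j : Fin n} (h : j ∈ (List.finRange n).drop m) : m ≤ (j : ℕ) := by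
  rw [List.mem_drop_iff_getElem] at h
  obtain ⟨i, hi, rfl⟩ := h
  simp

/-- The test input with `a` ones among the first `m` variables (in order `σ.symm`)
and `b` ones among the next ones. -/
def muInput (n m : ℕ) (σ : Equiv.Perm (Fin n)) (a b : ℕ) (x : Fin n) : Bool :=
  decide (((σ x : ℕ) < a) ∨ (m ≤ (σ x : ℕ) ∧ (σ x : ℕ) < m + b))

lemma muInput_countOnes (n m : ℕ) (σ : Equiv.Perm (Fin n)) (a b : ℕ)
    (ha : a ≤ m) (hb : m + b ≤ n) : countOnes (muInput n m σ a b) = a + b := by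
  classical
  have h1 : countOnes (muInput n m σ a b)
      = ((Finset.range n).filter (fun j => j < a ∨ (m ≤ j ∧ j < m + b))).card := by
    rw [countOnes]
    refine Finset.card_bij (fun x _ => ((σ x : Fin n) : ℕ)) ?_ ?_ ?_
    · intro x hx
      simp only [Finset.mem_filter, Finset.mem_univ, true_and, muInput,
        decide_eq_true_iff] at hx
      simp only [Finset.mem_filter, Finset.mem_range]
      exact ⟨(σ x).isLt, hx⟩
    · intro x _ y _ h
      exact σ.injective (Fin.val_injective h)
    · intro j hj
      simp only [Finset.mem_filter, Finset.mem_range] at hj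
      refine ⟨σ.symm ⟨j, hj.1⟩, ?_, by simp⟩
      simp only [Finset.mem_filter, Finset.mem_univ, true_and, muInput,
        Equiv.apply_symm_apply, decide_eq_true_iff]
      exact hj.2
  rw [h1]
  have h2 : ((Finset.range n).filter (fun j => j < a ∨ (m ≤ j ∧ j < m + b)))
      = Finset.range a ∪ Finset.Ico m (m + b) := by
    ext j; simp; omega
  rw [h2, Finset.card_union_of_disjoint, Finset.card_range, Nat.card_Ico]
  · omega
  · simp only [Finset.disjoint_left, Finset.mem_range, Finset.mem_Ico]
    omega

lemma countOnes_add_countZeros {n : ℕ} (ν : Fin n → Bool) :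
    countOnes ν + countZeros ν = n := by
  classical
  rw [countOnes, countZeros]
  have : (Finset.univ.filter (fun i => ν i = false))
      = (Finset.univ.filter (fun i => ¬ ν i = true)) := by
    ext i; simp
  rw [this, Finset.card_filter_add_card_filter_not, Finset.card_univ,
    Fintype.card_fin]

/-- For every even `n ≥ 2`, any deterministic OBDD computing `NotO_n` has width
at least `n/2 + 1`. -/
theorem notO_deterministic_lower_bound (n : ℕ) (hn : Even n) (h2 : 2 ≤ n) :
    ∀ (d : ℕ) (M : DOBDD n d), M.computes (NotO n) → n / 2 + 1 ≤ d := by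
  intro d M hM
  have hnm : n = 2 * (n / 2) := by
    have := Nat.even_iff.mp hn; omega
  set m := n / 2 with hm
  -- notation
  set σ := M.ord.symm with hσ
  set μ : ℕ → ℕ → Fin n → Bool := fun a b => muInput n m σ a b with hμ
  -- value of NotO on test inputs
  have hNotO : ∀ a b : ℕ, a ≤ m → b ≤ m → (NotO n (μ a b) = false ↔ a + b = m) := by
    intro a b ha hb
    have hc : countOnes (μ a b) = a + b := muInput_countOnes n m σ a b ha (by omega)
    have hz := countOnes_add_countZeros (μ a b)
    simp only [NotO, Bool.not_eq_false', decide_eq_true_iff]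
    omega
  -- run splits at position m
  have hrun : ∀ ν, M.run ν = ((List.finRange n).drop m).foldl
      (fun v j => M.T j (ν (M.ord j)) v)
      (((List.finRange n).take m).foldl (fun v j => M.T j (ν (M.ord j)) v) M.start) := by
    intro ν
    rw [DOBDD.run, ← List.foldl_append, List.take_append_drop]
  set g : ℕ → Fin d := fun a =>
    ((List.finRange n).take m).foldl (fun v j => M.T j (μ a 0 (M.ord j)) v) M.start with hg
  set H : ℕ → Fin d → Fin d := fun b v =>
    ((List.finRange n).drop m).foldl (fun w j => M.T j (μ 0 b (M.ord j)) w) v with hH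
  have hμval : ∀ a b (j : Fin n), μ a b (M.ord j)
      = decide (((j : ℕ) < a) ∨ (m ≤ (j : ℕ) ∧ (j : ℕ) < m + b)) := by
    intro a b j
    simp only [hμ, muInput, hσ, Equiv.symm_apply_apply]
  have hrun2 : ∀ a b : ℕ, a ≤ m → M.run (μ a b) = H b (g a) := by
    intro a b ha
    rw [hrun]
    have hpre : ((List.finRange n).take m).foldl
        (fun v j => M.T j (μ a b (M.ord j)) v) M.start = g a := by
      apply auxFoldlCongr
      intro j hj v
      have hjm : (j : ℕ) < m := auxMemTake hj
      rw [hμval, hμval]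
      congr 1
      simp only [decide_eq_decide]
      omega
    rw [hpre]
    apply auxFoldlCongr
    intro j hj v
    have hjm : m ≤ (j : ℕ) := auxMemDrop hj
    rw [hμval, hμval]
    congr 1
    simp only [decide_eq_decide]
    omega
  -- g is injective on {0, ..., m}
  have hginj : Set.InjOn g (Finset.range (m + 1)) := by
    intro a ha a' ha' hgg
    simp only [Finset.coe_range, Set.mem_Iio] at ha ha'
    by_contra hne
    set b := m - a with hb
    have h1 : M.run (μ a b) = M.run (μ a' b) := by
      rw [hrun2 a b (by omega), hrun2 a' b (by omega), hgg]
    have hf1 : NotO n (μ a b) = false := (hNotO a b (by omega) (by omega)).mpr (by omega)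
    have hf2 : NotO n (μ a' b) = true := by
      rcases h : NotO n (μ a' b) with _ | _
      · exact absurd ((hNotO a' b (by omega) (by omega)).mp h) (by omega)
      · rfl
    have hA1 : ¬ M.accepts (μ a b) := by
      rw [hM (μ a b), hf1]; simp
    have hA2 : M.accepts (μ a' b) := (hM (μ a' b)).mpr hf2
    rw [DOBDD.accepts, h1] at hA1
    exact hA1 hA2
  have hcard := Finset.card_le_card_of_injOn g
    (fun x _ => Finset.mem_univ (g x)) hginj
  simpa [Finset.card_range, Finset.card_univ] using hcard
end

section
/- For all integers n and d with 1 < d ≤ n/2, there exists a Boolean function f : {0,1}^n → {0,1} that is computed by some deterministic OBDD of width at most d but by no deterministic OBDD of width at most d − 1; consequently the class of functions computed by deterministic OBDDs of width at most d − 1 is strictly contained in the class computed by deterministic OBDDs of width at most d. -/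
/-!
The separating function is `MODf n d`: a counter modulo `d` computes it with width `d`.
Conversely, let an OBDD of width `< d` read the inputs that are `1` exactly on the levels
`[d - i, d + m)`, for `i < d`. After the first `d` levels two prefixes `i ≠ i'` reach the same
node, and the inputs agree from there on. So with `m = d - i` the OBDD ends in the same node on
inputs with `d` and `d - i + i'` ones, and only the first count is divisible by `d`.
This needs `2 * d ≤ n` levels.
-/

lemma countOnes_comp_perm {n : ℕ} (w : Fin n → Bool) (σ : Equiv.Perm (Fin n)) :
    countOnes (w ∘ σ) = countOnes w :=
  Finset.card_bij (fun j _ => σ j) (by simp) (fun _ _ _ _ h => σ.injective h)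
    (fun j hj => ⟨σ.symm j, by simpa using hj, by simp⟩)

lemma countOnes_interval {n a b : ℕ} (hab : a ≤ b) (hb : b ≤ n) :
    countOnes (fun j : Fin n => decide (a ≤ (j : ℕ) ∧ (j : ℕ) < b)) = b - a := by
  have hsplit : Finset.univ.filter (fun j : Fin n => decide (a ≤ (j : ℕ) ∧ (j : ℕ) < b) = true)
      = Finset.univ.filter (fun j : Fin n => (j : ℕ) < b) \
        Finset.univ.filter (fun j : Fin n => (j : ℕ) < a) := by
    ext j; simp only [decide_eq_true_eq, Finset.mem_filter, Finset.mem_univ, true_and,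
      Finset.mem_sdiff]; omega
  have hsub : Finset.univ.filter (fun j : Fin n => (j : ℕ) < a) ⊆
      Finset.univ.filter (fun j : Fin n => (j : ℕ) < b) := by
    intro j; simp only [Finset.mem_filter, Finset.mem_univ, true_and]; omega
  rw [countOnes, hsplit, Finset.card_sdiff_of_subset hsub, Fin.card_filter_val_lt,
    Fin.card_filter_val_lt]
  omega

lemma List.countP_finRange {n : ℕ} (p : Fin n → Bool) :
    (List.finRange n).countP p = (Finset.univ.filter (fun j => p j = true)).card := by
  rw [Fin.univ_def]
  simp [Finset.filter, Finset.card, List.countP_eq_length_filter, Multiset.filter_coe]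

lemma Nat.mod_ne_zero_of_lt_two_mul {c d : ℕ} (hc : 0 < c) (hcd : c < 2 * d) (hne : c ≠ d) :
    c % d ≠ 0 := by
  rcases lt_or_gt_of_ne hne with hlt | hgt
  · rw [Nat.mod_eq_of_lt hlt]; omega
  · rw [Nat.mod_eq_sub_mod hgt.le, Nat.mod_eq_of_lt (by omega)]; omega

lemma OBDDclass_mono (n : ℕ) : Monotone (OBDDclass n) :=
  fun _ _ hw _ ⟨d, hd, M, hM⟩ => ⟨d, hd.trans hw, M, hM⟩

namespace DOBDD

variable {n d : ℕ}

/-- The node reached after the first `k` levels on the input whose bit read at level `j` is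
`w j`, i.e. on the input `w ∘ M.ord.symm`. -/
def stateAfter (M : DOBDD n d) (k : ℕ) (w : Fin n → Bool) : Fin d :=
  ((List.finRange n).take k).foldl (fun v j => M.T j (w j) v) M.start

lemma run_comp_symm (M : DOBDD n d) (w : Fin n → Bool) (k : ℕ) :
    M.run (w ∘ M.ord.symm) =
      ((List.finRange n).drop k).foldl (fun v j => M.T j (w j) v) (M.stateAfter k w) := by
  rw [run, ← List.take_append_drop k (List.finRange n), List.foldl_append]
  simp [stateAfter]

lemma stateAfter_congr (M : DOBDD n d) {k : ℕ} {w w' : Fin n → Bool}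
    (h : ∀ j : Fin n, (j : ℕ) < k → w j = w' j) : M.stateAfter k w = M.stateAfter k w' := by
  refine List.foldl_ext _ _ _ fun v j hj => ?_
  obtain ⟨i, hi, rfl⟩ := List.mem_iff_getElem.mp hj
  rw [h _ (by simp at hi ⊢; omega)]

lemma run_eq_of_stateAfter_eq (M : DOBDD n d) {k : ℕ} {w w' : Fin n → Bool}
    (hk : M.stateAfter k w = M.stateAfter k w') (h : ∀ j : Fin n, k ≤ (j : ℕ) → w j = w' j) :
    M.run (w ∘ M.ord.symm) = M.run (w' ∘ M.ord.symm) := by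
  rw [run_comp_symm M w k, run_comp_symm M w' k, hk]
  refine List.foldl_ext _ _ _ fun v j hj => ?_
  obtain ⟨i, hi, rfl⟩ := List.mem_iff_getElem.mp hj
  rw [h _ (by simp)]

lemma computes.eq_of_run_eq {M : DOBDD n d} {f : (Fin n → Bool) → Bool} (hM : M.computes f)
    {ν ν' : Fin n → Bool} (h : M.run ν = M.run ν') : f ν = f ν' := by
  rw [Bool.eq_iff_iff, ← hM, ← hM, accepts, accepts, h]

lemma exists_ne_run_eq_of_card_lt {ι α : Type*} [Fintype ι] (M : DOBDD n d)
    (hd : d < Fintype.card ι) (k : ℕ) (word : ι → α → Fin n → Bool) (pre : ι → Fin n → Bool)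
    (hprefix : ∀ i a (j : Fin n), (j : ℕ) < k → word i a j = pre i j)
    (hsuffix : ∀ i i' a (j : Fin n), k ≤ (j : ℕ) → word i a j = word i' a j) :
    ∃ i i', i ≠ i' ∧ ∀ a, M.run (word i a ∘ M.ord.symm) = M.run (word i' a ∘ M.ord.symm) := by
  obtain ⟨i, i', hne, hi⟩ := Fintype.exists_ne_map_eq_of_card_lt
    (fun i => M.stateAfter k (pre i)) (by simpa using hd)
  refine ⟨i, i', hne, fun a => M.run_eq_of_stateAfter_eq ?_ (hsuffix i i' a)⟩
  rw [M.stateAfter_congr (hprefix i a), hi, M.stateAfter_congr fun j hj => (hprefix i' a j hj).symm]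

def modCounter (n d : ℕ) (hd : 0 < d) : DOBDD n d where
  ord := Equiv.refl _
  T _ b v := ⟨(v + b.toNat) % d, Nat.mod_lt _ hd⟩
  start := ⟨0, hd⟩
  Accept := {⟨0, hd⟩}

lemma modCounter_run (hd : 0 < d) (ν : Fin n → Bool) :
    ((modCounter n d hd).run ν : ℕ) = countOnes ν % d := by
  have hfold : ∀ (l : List (Fin n)) (v : Fin d),
      ((l.foldl (fun v j => (modCounter n d hd).T j (ν j) v) v : Fin d) : ℕ) =
        (v + l.countP ν) % d := by
    intro l
    induction l with
    | nil => simp [Nat.mod_eq_of_lt]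
    | cons j l ih =>
      intro v
      rw [List.foldl_cons, ih, List.countP_cons]
      simp only [modCounter]
      cases ν j <;> simp [Nat.add_assoc, Nat.add_comm 1]
  rw [run, countOnes, ← List.countP_finRange]
  simpa [modCounter] using hfold (List.finRange n) ⟨0, hd⟩

lemma modCounter_computes (hd : 0 < d) : (modCounter n d hd).computes (MODf n d) := by
  intro ν
  rw [accepts, MODf, decide_eq_true_iff, ← modCounter_run hd ν]
  simp [modCounter, Fin.ext_iff]

end DOBDD

lemma MODf_mem_OBDDclass {n d : ℕ} (hd : 0 < d) : MODf n d ∈ OBDDclass n d :=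
  ⟨d, le_rfl, DOBDD.modCounter n d hd, DOBDD.modCounter_computes hd⟩

lemma MODf_notMem_OBDDclass {n d w : ℕ} (hw : w < d) (hn : 2 * d ≤ n) :
    MODf n d ∉ OBDDclass n w := by
  rintro ⟨d', hd', M, hM⟩
  let word : Fin d → ℕ → Fin n → Bool := fun i m j => decide (d - i ≤ (j : ℕ) ∧ (j : ℕ) < d + m)
  obtain ⟨x, y, hxy, hrun⟩ := M.exists_ne_run_eq_of_card_lt (by simpa using hd'.trans_lt hw) d
    word (fun i j => decide (d - i ≤ (j : ℕ)))
    (fun i a j hj => by simp only [word, decide_eq_decide]; omega)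
    (fun i i' a j hj => by simp only [word, decide_eq_decide]; omega)
  have hcount : ∀ i : Fin d, countOnes (word i (d - x) ∘ M.ord.symm) = d - x + i := by
    intro i
    rw [countOnes_comp_perm, countOnes_interval (by omega) (by omega)]
    omega
  have hx : MODf n d (word x (d - x) ∘ M.ord.symm) = true := by
    unfold MODf
    simp [hcount x, Nat.sub_add_cancel x.isLt.le]
  have hy : MODf n d (word y (d - x) ∘ M.ord.symm) = false := by
    unfold MODf
    rw [hcount y, decide_eq_false_iff_not]
    exact Nat.mod_ne_zero_of_lt_two_mul (by omega) (by omega)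
      (fun h => hxy (Fin.ext (by omega)))
  simpa [hx, hy] using hM.eq_of_run_eq (hrun (d - x))

/-- For all `n, d` with `1 < d ≤ n/2`, there is a Boolean function computed by a deterministic
OBDD of width at most `d` but by none of width at most `d - 1`; consequently
`OBDD^{d-1} ⊊ OBDD^d`. -/
theorem deterministic_width_hierarchy (n d : ℕ) (h1 : 1 < d) (h2 : d ≤ n / 2) :
    (∃ f : (Fin n → Bool) → Bool, f ∈ OBDDclass n d ∧ f ∉ OBDDclass n (d - 1)) ∧
    OBDDclass n (d - 1) ⊂ OBDDclass n d := by
  have hmem : MODf n d ∈ OBDDclass n d := MODf_mem_OBDDclass (by omega)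
  have hnot : MODf n d ∉ OBDDclass n (d - 1) := MODf_notMem_OBDDclass (by omega) (by omega)
  exact ⟨⟨_, hmem, hnot⟩,
    (Set.ssubset_iff_of_subset (OBDDclass_mono n (Nat.sub_le d 1))).2 ⟨_, hmem, hnot⟩⟩
end
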